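/- arXiv:2407.15582 — 6 statements merged into one kernel-verified Lean document; each statement's English description precedes it below -/
import Mathlib

section
/- Let Y, Z ≥ 0, T₀ > 0 and α_l, α_u, β_l, β_u > 0 be real numbers, and let t : ℝ → ℝ satisfy α_l + β_l·R ≤ t(R) ≤ α_u + β_u·R for all R > 0. Define V(R) = (t(R)/T₀)·(Y/R + Z) for R > 0 and set R₀ = α_l/β_l. Then for every R > 0, V(R₀) ≤ (α_u/α_l + β_u/β_l)·V(R); in particular V(R₀) ≤ (α_u/α_l + β_u/β_l)·inf_{R>0} V(R). -/
theorem stmt_4 (Y Z T₀ αl αu βl βu : ℝ) (hY : 0 ≤ Y) (hZ : 0 ≤ Z) (hT₀ : 0 < T₀)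
    (hαl : 0 < αl) (hαu : 0 < αu) (hβl : 0 < βl) (hβu : 0 < βu)
    (t : ℝ → ℝ) (ht : ∀ R : ℝ, 0 < R → αl + βl * R ≤ t R ∧ t R ≤ αu + βu * R)
    (V : ℝ → ℝ) (hV : ∀ R : ℝ, 0 < R → V R = (t R / T₀) * (Y / R + Z)) :
    ∀ R : ℝ, 0 < R → V (αl / βl) ≤ (αu / αl + βu / βl) * V R := by
  intro R hR
  have hR₀ : (0:ℝ) < αl / βl := div_pos hαl hβl
  rw [hV _ hR₀, hV _ hR]
  have h1 := (ht _ hR₀).2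
  have h2 := (ht _ hR).1
  have hpos : 0 ≤ Y / R + Z := by positivity
  have hub : t (αl/βl) / T₀ * (Y / (αl/βl) + Z)
      ≤ (αu + βu * (αl/βl)) / T₀ * (Y / (αl/βl) + Z) := by
    apply mul_le_mul_of_nonneg_right _ (by positivity)
    exact div_le_div_of_nonneg_right h1 hT₀.le
  have hlb : (αl + βl * R) / T₀ * (Y / R + Z) ≤ t R / T₀ * (Y / R + Z) :=
    mul_le_mul_of_nonneg_right (div_le_div_of_nonneg_right h2 hT₀.le) hpos
  have key : (αu + βu * (αl/βl)) / T₀ * (Y / (αl/βl) + Z)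
      ≤ (αu / αl + βu / βl) * ((αl + βl * R) / T₀ * (Y / R + Z)) := by
    have hRne := hR.ne'
    field_simp
    ring_nf
    nlinarith [mul_nonneg (by positivity : (0:ℝ) ≤ αu * βl ^ 2 * αl ^ 2 * T₀) hY,
      mul_nonneg (by positivity : (0:ℝ) ≤ αu * βl ^ 3 * αl * T₀ * R ^ 2) hZ,
      mul_nonneg (by positivity : (0:ℝ) ≤ βl * βu * αl ^ 3 * T₀) hY,
      mul_nonneg (by positivity : (0:ℝ) ≤ βl ^ 2 * βu * αl ^ 2 * T₀ * R ^ 2) hZ,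
      mul_nonneg hαl.le hY, mul_nonneg (by positivity : (0:ℝ) ≤ βl * R ^ 2) hZ]
  calc t (αl/βl) / T₀ * (Y / (αl/βl) + Z) ≤ (αu + βu * (αl/βl)) / T₀ * (Y / (αl/βl) + Z) := hub
    _ ≤ (αu / αl + βu / βl) * ((αl + βl * R) / T₀ * (Y / R + Z)) := key
    _ ≤ (αu / αl + βu / βl) * (t R / T₀ * (Y / R + Z)) := by
        apply mul_le_mul_of_nonneg_left hlb (by positivity)
end

section
/- Let Y, Z ≥ 0, T₀ > 0 and α, β > 0 be real numbers, and define V(R) = ((α + β·R)/T₀)·(Y/R + Z) for R > 0. Then for every R > 0, V(α/β) ≤ 2·V(R); that is, R₀ = α/β is a 2-optimal reusing times for the constant-cost model t(R) = α + β·R. -/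
theorem stmt_5 (Y Z T₀ α β : ℝ) (hY : 0 ≤ Y) (hZ : 0 ≤ Z) (hT₀ : 0 < T₀)
    (hα : 0 < α) (hβ : 0 < β)
    (V : ℝ → ℝ) (hV : ∀ R : ℝ, 0 < R → V R = ((α + β * R) / T₀) * (Y / R + Z)) :
    ∀ R : ℝ, 0 < R → V (α / β) ≤ 2 * V R := by
  intro R hR
  rw [hV _ (div_pos hα hβ), hV R hR]
  have h1 : α + β * (α / β) = 2 * α := by field_simp; ring
  have h2 : Y / (α / β) = β * Y / α := by
    rw [div_div_eq_mul_div, mul_comm]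
  rw [h1, h2]
  rw [show (2 : ℝ) * α / T₀ * (β * Y / α + Z) = (2 * α * (β * Y / α + Z)) / T₀ by ring,
    show (2 : ℝ) * ((α + β * R) / T₀ * (Y / R + Z)) = (2 * ((α + β * R) * (Y / R + Z))) / T₀ by ring,
    div_le_div_iff₀ hT₀ hT₀]
  have e1 : 2 * α * (β * Y / α + Z) = 2 * β * Y + 2 * α * Z := by field_simp
  have e2 : (α + β * R) * (Y / R + Z) = α * (Y / R) + α * Z + β * Y + β * R * Z := by
    field_simp; ring
  rw [e1, e2]
  have h3 : 0 ≤ α * (Y / R) := by positivity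
  nlinarith [mul_nonneg (mul_nonneg hβ.le hR.le) hZ, mul_pos hT₀ hT₀]
end

section
/- Let C₁, C₂, Y, Z be strictly positive real numbers, let R_c be a positive integer, define g(n) = (C₁·⌈n/R_c⌉ + C₂)·(Y/n + Z) for positive integers n, and set x = √(C₂·Y/(C₁·Z·R_c)). Assume x ≥ 1. Then for every positive integer n, min( g(⌊x⌋·R_c), g(⌈x⌉·R_c) ) ≤ g(n); that is, the minimum of g over the positive integers is attained at ⌊x⌋·R_c or at ⌈x⌉·R_c. -/
/-!
At a multiple `m * R_c` the ceiling is exact and `g (m * R_c) = C₁ Z m + (C₂ Y / R_c) / m + const`,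
a function of the form `a m + b / m` with `a * x ^ 2 = b`; it decreases for `m ≤ x` and increases
for `m ≥ x`, so over the positive integers it is minimised at `⌊x⌋` or `⌈x⌉`. A general `n` is
no better than `⌈n / R_c⌉ * R_c`: both have the same cost, and the larger one has smaller `Y / n`.
-/

theorem add_div_sub_add_div {a b s t : ℝ} (hs : s ≠ 0) (ht : t ≠ 0) :
    a * t + b / t - (a * s + b / s) = (t - s) * (a * (s * t) - b) / (s * t) := by
  field_simp
  ring

theorem add_div_le_add_div_of_mul_le {a b s t : ℝ} (hs : 0 < s) (hst : s ≤ t)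
    (h : a * (s * t) ≤ b) : a * t + b / t ≤ a * s + b / s := by
  have ht : 0 < t := hs.trans_le hst
  rw [← sub_nonpos, add_div_sub_add_div hs.ne' ht.ne']
  exact div_nonpos_of_nonpos_of_nonneg
    (mul_nonpos_of_nonneg_of_nonpos (sub_nonneg.2 hst) (sub_nonpos.2 h)) (by positivity)

theorem add_div_le_add_div_of_le_mul {a b s t : ℝ} (hs : 0 < s) (hst : s ≤ t)
    (h : b ≤ a * (s * t)) : a * s + b / s ≤ a * t + b / t := by
  have ht : 0 < t := hs.trans_le hst
  rw [← sub_nonneg, add_div_sub_add_div hs.ne' ht.ne']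
  exact div_nonneg (mul_nonneg (sub_nonneg.2 hst) (sub_nonneg.2 h)) (by positivity)

theorem min_floor_ceil_add_div_le {a b x : ℝ} (ha : 0 ≤ a) (hx : 0 < x) (hab : a * x ^ 2 = b)
    {m : ℕ} (hm : 0 < m) :
    min (a * ⌊x⌋₊ + b / ⌊x⌋₊) (a * ⌈x⌉₊ + b / ⌈x⌉₊) ≤ a * m + b / m := by
  rcases le_or_gt m ⌊x⌋₊ with hfloor | hfloor
  · have hmx : (m : ℝ) ≤ x := (Nat.cast_le.2 hfloor).trans (Nat.floor_le hx.le)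
    refine (min_le_left _ _).trans (add_div_le_add_div_of_mul_le (by positivity)
      (Nat.cast_le.2 hfloor) ?_)
    rw [← hab, sq]
    gcongr
    exact Nat.floor_le hx.le
  · have hceil : ⌈x⌉₊ ≤ m := (Nat.ceil_le_floor_add_one x).trans hfloor
    refine (min_le_right _ _).trans (add_div_le_add_div_of_le_mul (by positivity)
      (Nat.cast_le.2 hceil) ?_)
    rw [← hab, sq]
    gcongr
    · exact Nat.le_ceil x
    · exact (Nat.le_ceil x).trans (Nat.cast_le.2 hceil)

noncomputable def ladderVariance (C₁ C₂ Y Z : ℝ) (R n : ℕ) : ℝ :=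
  (C₁ * (⌈(n : ℝ) / (R : ℝ)⌉ : ℤ) + C₂) * (Y / (n : ℝ) + Z)

section ladderVariance

variable {C₁ C₂ Y Z : ℝ} {R : ℕ}

theorem ladderVariance_mul_right (hR : 0 < R) {m : ℕ} (hm : 0 < m) :
    ladderVariance C₁ C₂ Y Z R (m * R) =
      C₁ * Z * m + C₂ * Y / R / m + (C₁ * Y / R + C₂ * Z) := by
  have hR' : (R : ℝ) ≠ 0 := by positivity
  have hm' : (m : ℝ) ≠ 0 := by positivity
  have hdiv : ((m * R : ℕ) : ℝ) / R = m := by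
    push_cast
    field_simp
  rw [ladderVariance, hdiv, Int.ceil_natCast, Int.cast_natCast]
  push_cast
  field_simp
  ring

theorem ladderVariance_ceil_div_mul_le (hC₁ : 0 ≤ C₁) (hC₂ : 0 ≤ C₂) (hY : 0 ≤ Y) (hR : 0 < R)
    {n : ℕ} (hn : 0 < n) :
    ladderVariance C₁ C₂ Y Z R (⌈(n : ℝ) / R⌉₊ * R) ≤ ladderVariance C₁ C₂ Y Z R n := by
  have hnR : (0 : ℝ) < n / R := by positivity
  have hdiv : ((⌈(n : ℝ) / R⌉₊ * R : ℕ) : ℝ) / R = ⌈(n : ℝ) / R⌉₊ := by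
    push_cast
    field_simp
  have hle : (n : ℝ) ≤ ((⌈(n : ℝ) / R⌉₊ * R : ℕ) : ℝ) := by
    rw [Nat.cast_mul, ← div_le_iff₀ (by positivity)]
    exact Nat.le_ceil _
  unfold ladderVariance
  rw [hdiv, Int.ceil_natCast, Int.cast_natCast, ← natCast_ceil_eq_intCast_ceil hnR.le]
  gcongr

end ladderVariance

theorem stmt_6 (C₁ C₂ Y Z : ℝ) (hC₁ : 0 < C₁) (hC₂ : 0 < C₂) (hY : 0 < Y) (hZ : 0 < Z)
    (Rc : ℕ) (hRc : 0 < Rc)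
    (g : ℕ → ℝ)
    (hg : ∀ n : ℕ, 0 < n →
      g n = (C₁ * (⌈(n : ℝ) / (Rc : ℝ)⌉ : ℤ) + C₂) * (Y / (n : ℝ) + Z))
    (x : ℝ) (hx : x = Real.sqrt (C₂ * Y / (C₁ * Z * (Rc : ℝ)))) (hx1 : 1 ≤ x) :
    ∀ n : ℕ, 0 < n → min (g (⌊x⌋₊ * Rc)) (g (⌈x⌉₊ * Rc)) ≤ g n := by
  intro n hn
  have hgm : ∀ m, 0 < m → g (m * Rc) = C₁ * Z * m + C₂ * Y / Rc / m + (C₁ * Y / Rc + C₂ * Z) :=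
    fun m hm => (hg _ (Nat.mul_pos hm hRc)).trans (ladderVariance_mul_right hRc hm)
  have hxsq : C₁ * Z * x ^ 2 = C₂ * Y / Rc := by
    rw [hx, Real.sq_sqrt (by positivity)]
    field_simp
  have hk : 0 < ⌈(n : ℝ) / Rc⌉₊ := Nat.ceil_pos.2 (by positivity)
  have hx0 : 0 < x := one_pos.trans_le hx1
  calc min (g (⌊x⌋₊ * Rc)) (g (⌈x⌉₊ * Rc))
      ≤ g (⌈(n : ℝ) / Rc⌉₊ * Rc) := by
        rw [hgm _ (Nat.floor_pos.2 hx1), hgm _ (Nat.ceil_pos.2 hx0), hgm _ hk,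
          min_add_add_right]
        gcongr
        exact min_floor_ceil_add_div_le (by positivity) hx0 hxsq hk
    _ ≤ g n := by
        rw [hg _ (Nat.mul_pos hk hRc), hg n hn]
        exact ladderVariance_ceil_div_mul_le hC₁.le hC₂.le hY.le hRc hn
end

section
/- Let Y, Z ≥ 0, T₀ > 0, C₁, C₂ > 0 be real numbers and let R_c be a positive integer. Define t(n) = C₁·⌈n/R_c⌉ + C₂ and V(n) = (t(n)/T₀)·(Y/n + Z) for positive integers n. Assume R₀ := C₂·R_c/C₁ is a positive integer. Then for every positive integer n, V(R₀) ≤ (2 + (C₁/C₂)·(1 − 1/R_c))·V(n); that is, R₀ is a (2 + (C₁/C₂)(1 − 1/R_c))-optimal reusing times. -/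
lemma ceil_div_le_aux (n Rc : ℕ) (hRc : 0 < Rc) :
    ((⌈(n : ℝ) / (Rc : ℝ)⌉ : ℤ) : ℝ) ≤ (n : ℝ) / Rc + 1 - 1 / Rc := by
  set m := (n + Rc - 1) / Rc with hm
  have h1 : m * Rc ≤ n + Rc - 1 := Nat.div_mul_le_self _ _
  have hlt2 : n + Rc - 1 < m * Rc + Rc := Nat.lt_div_mul_add hRc
  have h2 : n ≤ m * Rc := by
    have h6 : n + Rc ≤ m * Rc + Rc := by
      calc n + Rc = (n + Rc - 1) + 1 := by omega
        _ ≤ m * Rc + Rc := hlt2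
    exact Nat.le_of_add_le_add_right h6
  have hRcR : (0 : ℝ) < (Rc : ℝ) := by exact_mod_cast hRc
  have hceil : ⌈(n : ℝ) / (Rc : ℝ)⌉ ≤ (m : ℤ) := by
    rw [Int.ceil_le, div_le_iff₀ hRcR]
    exact_mod_cast h2
  have h3 : ((⌈(n : ℝ) / (Rc : ℝ)⌉ : ℤ) : ℝ) ≤ (m : ℝ) := by exact_mod_cast hceil
  refine h3.trans ?_
  have h4 : (m : ℝ) * Rc ≤ (n : ℝ) + Rc - 1 := by
    have h5 : ((m * Rc : ℕ) : ℝ) ≤ ((n + Rc - 1 : ℕ) : ℝ) := by exact_mod_cast h1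
    push_cast [Nat.cast_sub (by omega : 1 ≤ n + Rc)] at h5
    linarith
  rw [show (n : ℝ) / Rc + 1 - 1 / Rc = ((n : ℝ) + Rc - 1) / Rc by field_simp]
  rw [le_div_iff₀ hRcR]
  linarith

theorem stmt_7 (Y Z T₀ C₁ C₂ : ℝ) (hY : 0 ≤ Y) (hZ : 0 ≤ Z) (hT₀ : 0 < T₀)
    (hC₁ : 0 < C₁) (hC₂ : 0 < C₂) (Rc : ℕ) (hRc : 0 < Rc)
    (t : ℕ → ℝ) (ht : ∀ n : ℕ, t n = C₁ * (⌈(n : ℝ) / (Rc : ℝ)⌉ : ℤ) + C₂)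
    (V : ℕ → ℝ) (hV : ∀ n : ℕ, 0 < n → V n = (t n / T₀) * (Y / (n : ℝ) + Z))
    (R₀ : ℕ) (hR₀pos : 0 < R₀) (hR₀ : (R₀ : ℝ) = C₂ * (Rc : ℝ) / C₁) :
    ∀ n : ℕ, 0 < n → V R₀ ≤ (2 + (C₁ / C₂) * (1 - 1 / (Rc : ℝ))) * V n := by
  intro n hn
  have hRcR : (0 : ℝ) < (Rc : ℝ) := by exact_mod_cast hRc
  have hnR : (0 : ℝ) < (n : ℝ) := by exact_mod_cast hn
  have hR₀R : (0 : ℝ) < (R₀ : ℝ) := by exact_mod_cast hR₀pos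
  have hRc1 : (1 : ℝ) ≤ (Rc : ℝ) := by exact_mod_cast hRc
  set K := 2 + (C₁ / C₂) * (1 - 1 / (Rc : ℝ)) with hK
  have hfrac : 0 ≤ 1 - 1 / (Rc : ℝ) := by
    have : 1 / (Rc : ℝ) ≤ 1 := by rw [div_le_one hRcR]; exact hRc1
    linarith
  have hKpos : 0 < K := by
    have : 0 ≤ (C₁ / C₂) * (1 - 1 / (Rc : ℝ)) :=
      mul_nonneg (le_of_lt (div_pos hC₁ hC₂)) hfrac
    rw [hK]; linarith
  rw [hV R₀ hR₀pos, hV n hn, ht R₀, ht n]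
  set cR := ((⌈(R₀ : ℝ) / (Rc : ℝ)⌉ : ℤ) : ℝ) with hcR
  set cn := ((⌈(n : ℝ) / (Rc : ℝ)⌉ : ℤ) : ℝ) with hcn
  have hceilR : cR ≤ (R₀ : ℝ) / Rc + 1 - 1 / Rc := ceil_div_le_aux R₀ Rc hRc
  have hdivR₀ : (R₀ : ℝ) / Rc = C₂ / C₁ := by rw [hR₀]; field_simp
  have htR₀ : C₁ * cR + C₂ ≤ C₂ * K := by
    have h1 : C₁ * cR ≤ C₁ * (C₂ / C₁ + 1 - 1 / Rc) := by
      apply mul_le_mul_of_nonneg_left _ (le_of_lt hC₁)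
      rw [hdivR₀] at hceilR; linarith
    have hexp : C₁ * (C₂ / C₁ + 1 - 1 / Rc) = C₂ + C₁ * (1 - 1 / Rc) := by
      field_simp; ring
    have hKexp : C₂ * K = 2 * C₂ + C₁ * (1 - 1 / Rc) := by
      rw [hK]; field_simp
    rw [hKexp]; rw [hexp] at h1; linarith
  have hceiln : (n : ℝ) / Rc ≤ cn := Int.le_ceil _
  have hYnZ : 0 ≤ Y / n + Z := by positivity
  have hYRZ : 0 ≤ Y / R₀ + Z := by positivity
  have hkey : C₂ * (Y / R₀ + Z) ≤ (C₁ * cn + C₂) * (Y / n + Z) := by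
    have hCR : C₂ / (R₀ : ℝ) = C₁ / Rc := by
      rw [hR₀]; field_simp
    have h1 : C₂ * (Y / R₀ + Z) = C₁ * Y / Rc + C₂ * Z := by
      have h : C₂ * (Y / R₀) = (C₂ / (R₀ : ℝ)) * Y := by ring
      rw [mul_add, h, hCR]; ring
    have h2 : (C₁ * ((n : ℝ) / Rc) + C₂) * (Y / n + Z)
        = C₁ * Y / Rc + C₂ * Y / n + C₁ * Z * n / Rc + C₂ * Z := by
      field_simp; ring
    have h3 : (C₁ * ((n : ℝ) / Rc) + C₂) * (Y / n + Z) ≤ (C₁ * cn + C₂) * (Y / n + Z) := by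
      apply mul_le_mul_of_nonneg_right _ hYnZ
      have := mul_le_mul_of_nonneg_left hceiln (le_of_lt hC₁)
      linarith
    have h4 : 0 ≤ C₂ * Y / n := by positivity
    have h5 : 0 ≤ C₁ * Z * n / Rc := by positivity
    rw [h1]; rw [h2] at h3; linarith
  calc (C₁ * cR + C₂) / T₀ * (Y / R₀ + Z)
      ≤ (C₂ * K) / T₀ * (Y / R₀ + Z) := by
        gcongr
    _ = (K / T₀) * (C₂ * (Y / R₀ + Z)) := by ring
    _ ≤ (K / T₀) * ((C₁ * cn + C₂) * (Y / n + Z)) :=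
        mul_le_mul_of_nonneg_left hkey (by positivity)
    _ = K * ((C₁ * cn + C₂) / T₀ * (Y / n + Z)) := by ring
end

section
/- Let Y ≥ 0, Z > 0, T₀ > 0 and α_l, α_u, β_l, β_u > 0 be real numbers, and let t : ℝ → ℝ satisfy α_l + β_l·R ≤ t(R) ≤ α_u + β_u·R for all R > 0. Define V(R) = (t(R)/T₀)·(Y/R + Z) for R > 0, and suppose R* > 0 attains the minimum of V over (0, ∞). Set a = β_l·Z, b = (√(α_u·Z) + √(β_u·Y))² − (α_l·Z + β_l·Y), and c = α_l·Y. Then a·(R*)² − b·R* + c ≤ 0; consequently b² ≥ 4·a·c and (b − √(b² − 4ac))/(2a) ≤ R* ≤ (b + √(b² − 4ac))/(2a). -/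
theorem stmt_8 (Y Z T₀ αl αu βl βu : ℝ) (hY : 0 ≤ Y) (hZ : 0 < Z) (hT₀ : 0 < T₀)
    (hαl : 0 < αl) (hαu : 0 < αu) (hβl : 0 < βl) (hβu : 0 < βu)
    (t : ℝ → ℝ) (ht : ∀ R : ℝ, 0 < R → αl + βl * R ≤ t R ∧ t R ≤ αu + βu * R)
    (V : ℝ → ℝ) (hV : ∀ R : ℝ, 0 < R → V R = (t R / T₀) * (Y / R + Z))
    (Rstar : ℝ) (hRstarpos : 0 < Rstar)
    (hmin : ∀ R : ℝ, 0 < R → V Rstar ≤ V R)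
    (a b c : ℝ)
    (ha : a = βl * Z)
    (hb : b = (Real.sqrt (αu * Z) + Real.sqrt (βu * Y)) ^ 2 - (αl * Z + βl * Y))
    (hc : c = αl * Y) :
    a * Rstar ^ 2 - b * Rstar + c ≤ 0 ∧
    b ^ 2 ≥ 4 * a * c ∧
    (b - Real.sqrt (b ^ 2 - 4 * a * c)) / (2 * a) ≤ Rstar ∧
    Rstar ≤ (b + Real.sqrt (b ^ 2 - 4 * a * c)) / (2 * a) := by
  set s : ℝ := (Real.sqrt (αu * Z) + Real.sqrt (βu * Y)) ^ 2 with hs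
  -- chain inequality
  have hchain : ∀ R : ℝ, 0 < R →
      (αl + βl * Rstar) * (Y / Rstar + Z) ≤ (αu + βu * R) * (Y / R + Z) := by
    intro R hR
    have h1 := (ht Rstar hRstarpos).1
    have h2 := (ht R hR).2
    have hp1 : 0 ≤ Y / Rstar + Z := by positivity
    have hp2 : 0 ≤ Y / R + Z := by positivity
    have hm := hmin R hR
    rw [hV Rstar hRstarpos, hV R hR] at hm
    have hm' : t Rstar * (Y / Rstar + Z) ≤ t R * (Y / R + Z) := by
      have := mul_le_mul_of_nonneg_right hm hT₀.le
      calc t Rstar * (Y / Rstar + Z) = (t Rstar / T₀) * (Y / Rstar + Z) * T₀ := by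
            field_simp
        _ ≤ (t R / T₀) * (Y / R + Z) * T₀ := this
        _ = t R * (Y / R + Z) := by field_simp
    calc (αl + βl * Rstar) * (Y / Rstar + Z) ≤ t Rstar * (Y / Rstar + Z) :=
          mul_le_mul_of_nonneg_right h1 hp1
      _ ≤ t R * (Y / R + Z) := hm'
      _ ≤ (αu + βu * R) * (Y / R + Z) := mul_le_mul_of_nonneg_right h2 hp2
  -- key inequality
  have hK : (αl + βl * Rstar) * (Y / Rstar + Z) ≤ s := by
    rcases eq_or_lt_of_le hY with hY0 | hY0
    · -- Y = 0
      apply le_of_forall_pos_le_add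
      intro ε hε
      have hR1 : (0:ℝ) < ε / (βu * Z) := by positivity
      have := hchain _ hR1
      have hsZ : s = αu * Z := by
        rw [hs, ← hY0]
        rw [mul_zero, Real.sqrt_zero]
        rw [add_zero, Real.sq_sqrt (by positivity)]
      rw [hsZ]
      have hexp : (αu + βu * (ε / (βu * Z))) * (Y / (ε / (βu * Z)) + Z)
          = αu * Z + ε := by
        rw [← hY0]
        field_simp
        ring
      linarith [this, hexp ▸ this]
    · -- Y > 0
      set u := Real.sqrt (αu * Y) with hu
      set v := Real.sqrt (βu * Z) with hv
      have hupos : 0 < u := Real.sqrt_pos.mpr (by positivity)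
      have hvpos : 0 < v := Real.sqrt_pos.mpr (by positivity)
      have hu2 : u ^ 2 = αu * Y := Real.sq_sqrt (by positivity)
      have hv2 : v ^ 2 = βu * Z := Real.sq_sqrt (by positivity)
      have hR0 : (0:ℝ) < u / v := by positivity
      have h := hchain _ hR0
      have hcross : Real.sqrt (αu * Z) * Real.sqrt (βu * Y) = u * v := by
        rw [← Real.sqrt_mul (by positivity), hu, hv, ← Real.sqrt_mul (by positivity)]
        ring_nf
      have hval : (αu + βu * (u / v)) * (Y / (u / v) + Z) = s := by
        have : (αu + βu * (u / v)) * (Y / (u / v) + Z)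
            = αu * Z + βu * Y + (αu * Y) * (v / u) + (βu * Z) * (u / v) := by
          field_simp
          ring
        rw [this, ← hu2, ← hv2, hs]
        have e1 : u ^ 2 * (v / u) = u * v := by field_simp
        have e2 : v ^ 2 * (u / v) = u * v := by field_simp
        have e3 : u ^ 2 * Z⁻¹ * Z = u ^ 2 := by field_simp
        rw [e1, e2]
        have : (Real.sqrt (αu * Z) + Real.sqrt (βu * Y)) ^ 2
            = Real.sqrt (αu * Z) ^ 2 + 2 * (Real.sqrt (αu * Z) * Real.sqrt (βu * Y))
              + Real.sqrt (βu * Y) ^ 2 := by ring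
        rw [this, hcross, Real.sq_sqrt (by positivity), Real.sq_sqrt (by positivity)]
        ring
      linarith [hval ▸ h]
  -- quadratic inequality
  have hYdiv : Y / Rstar * Rstar = Y := div_mul_cancel₀ Y (ne_of_gt hRstarpos)
  have hq : a * Rstar ^ 2 - b * Rstar + c ≤ 0 := by
    have hmulR := mul_le_mul_of_nonneg_right hK hRstarpos.le
    have hexp : (αl + βl * Rstar) * (Y / Rstar + Z) * Rstar
        = αl * Y + (αl * Z + βl * Y) * Rstar + βl * Z * Rstar ^ 2 := by
      have : (Y / Rstar + Z) * Rstar = Y + Z * Rstar := by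
        rw [add_mul, hYdiv]
      rw [mul_assoc, this]; ring
    rw [hexp] at hmulR
    have hbR : b * Rstar = s * Rstar - (αl * Z + βl * Y) * Rstar := by rw [hb]; ring
    rw [ha, hc]
    nlinarith [hmulR, hbR]
  have hapos : 0 < a := by rw [ha]; positivity
  have hD : (2 * a * Rstar - b) ^ 2 ≤ b ^ 2 - 4 * a * c := by nlinarith [mul_le_mul_of_nonneg_left hq hapos.le]
  have hDnn : 0 ≤ b ^ 2 - 4 * a * c := le_trans (sq_nonneg _) hD
  have habs : |2 * a * Rstar - b| ≤ Real.sqrt (b ^ 2 - 4 * a * c) := by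
    rw [← Real.sqrt_sq_eq_abs]
    exact Real.sqrt_le_sqrt hD
  rw [abs_le] at habs
  refine ⟨hq, by linarith, ?_, ?_⟩
  · rw [div_le_iff₀ (by linarith)]
    linarith [habs.2]
  · rw [le_div_iff₀ (by linarith)]
    linarith [habs.1]
end

section
/- Let d ≥ 1 be a natural number, let p be a scalar, and define the depolarizing map Λ on d × d complex matrices by Λ(ρ) = p·ρ + ((1 − p)·Tr(ρ)/d)·I. Let U₁, …, U_m be unitary d × d matrices and let U_inv = (U_m ⋯ U₂ U₁)⁻¹. Then for every d × d matrix ρ, U_inv · Λ( U_m · ( ⋯ Λ( U₂ · Λ( U₁ ρ U₁* ) · U₂* ) ⋯ ) · U_m* ) · U_inv* = p^m·ρ + ((1 − p^m)·Tr(ρ)/d)·I. In particular, the output state depends only on p, m, and ρ, and not on the choice of the unitaries U₁, …, U_m. -/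
lemma rb_aux (d : ℕ) (hd : 1 ≤ d) (p : ℂ)
    (Λ : Matrix (Fin d) (Fin d) ℂ → Matrix (Fin d) (Fin d) ℂ)
    (hΛ : ∀ ρ, Λ ρ = p • ρ + ((1 - p) * ρ.trace / (d : ℂ)) • (1 : Matrix (Fin d) (Fin d) ℂ)) :
    ∀ L : List (Matrix (Fin d) (Fin d) ℂ),
      (∀ A ∈ L, A ∈ Matrix.unitaryGroup (Fin d) ℂ) →
      ∀ ρ : Matrix (Fin d) (Fin d) ℂ,
        L.foldl (fun σ A => Λ (A * σ * star A)) ρ =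
          p ^ L.length • (L.reverse.prod * ρ * star L.reverse.prod) +
            ((1 - p ^ L.length) * ρ.trace / (d : ℂ)) • (1 : Matrix (Fin d) (Fin d) ℂ) := by
  have hdC : (d : ℂ) ≠ 0 := by
    exact_mod_cast Nat.cast_ne_zero.mpr (by omega)
  intro L
  induction L with
  | nil =>
    intro _ ρ
    simp
  | cons a l ih =>
    intro hmem ρ
    have ha : a ∈ Matrix.unitaryGroup (Fin d) ℂ := hmem a List.mem_cons_self
    have ha1 : star a * a = 1 := ha.1
    
    have hl : ∀ A ∈ l, A ∈ Matrix.unitaryGroup (Fin d) ℂ := fun A hA => hmem A (List.mem_cons_of_mem a hA)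
    have htr : (a * ρ * star a).trace = ρ.trace := by
      rw [Matrix.trace_mul_cycle, ha1, one_mul]
    rw [List.foldl_cons, ih hl, hΛ]
    set Q := l.reverse.prod with hQ
    have hQu : Q ∈ Matrix.unitaryGroup (Fin d) ℂ := by
      apply Submonoid.list_prod_mem
      intro x hx
      exact hl x (by simpa using hx)
    have hQ1 : star Q * Q = 1 := hQu.1
    have hQ2 : Q * star Q = 1 := hQu.2
    have hrev : (a :: l).reverse.prod = Q * a := by
      simp [hQ]
    have htr2 : (p • (a * ρ * star a) +
        ((1 - p) * ρ.trace / (d : ℂ)) • (1 : Matrix (Fin d) (Fin d) ℂ)).trace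
        = ρ.trace := by
      simp [Matrix.trace_smul, htr, Matrix.trace_one]
      field_simp
      ring
    rw [htr, htr2, hrev]
    have h1 : Q * (a * ρ * star a) * star Q = Q * a * ρ * star (Q * a) := by
      rw [Matrix.star_mul]
      noncomm_ring
    rw [Matrix.mul_add, Matrix.add_mul, Matrix.mul_smul, Matrix.smul_mul,
      Matrix.mul_smul, Matrix.smul_mul, mul_one, hQ2]
    rw [h1, smul_add, smul_smul, smul_smul, add_assoc, ← add_smul]
    rw [List.length_cons, pow_succ]
    congr 1 <;> ring_nf

theorem stmt_14 (d m : ℕ) (hd : 1 ≤ d) (p : ℂ)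
    (Λ : Matrix (Fin d) (Fin d) ℂ → Matrix (Fin d) (Fin d) ℂ)
    (hΛ : ∀ ρ, Λ ρ = p • ρ + ((1 - p) * ρ.trace / (d : ℂ)) • (1 : Matrix (Fin d) (Fin d) ℂ))
    (U : Fin m → Matrix (Fin d) (Fin d) ℂ)
    (hU : ∀ i, U i ∈ Matrix.unitaryGroup (Fin d) ℂ)
    (Uinv : Matrix (Fin d) (Fin d) ℂ)
    (hUinv : Uinv = ((List.ofFn U).reverse.prod)⁻¹) :
    ∀ ρ : Matrix (Fin d) (Fin d) ℂ,
      Uinv * ((List.ofFn U).foldl (fun σ A => Λ (A * σ * star A)) ρ) * star Uinv =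
        p ^ m • ρ + ((1 - p ^ m) * ρ.trace / (d : ℂ)) • (1 : Matrix (Fin d) (Fin d) ℂ) := by
  intro ρ
  set L := List.ofFn U with hL
  have hmem : ∀ A ∈ L, A ∈ Matrix.unitaryGroup (Fin d) ℂ := by
    intro A hA
    rw [hL, List.mem_ofFn] at hA
    obtain ⟨i, rfl⟩ := hA
    exact hU i
  set Q := L.reverse.prod with hQ
  have hQu : Q ∈ Matrix.unitaryGroup (Fin d) ℂ := by
    apply Submonoid.list_prod_mem
    intro x hx
    exact hmem x (by simpa using hx)
  have hQ1 : star Q * Q = 1 := hQu.1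
  have hQ2 : Q * star Q = 1 := hQu.2
  have hinv : Uinv = star Q := by
    rw [hUinv, Matrix.inv_eq_left_inv hQ1]
  have hlen : L.length = m := by simp [hL]
  rw [rb_aux d hd p Λ hΛ L hmem ρ, hinv, hlen, star_star]
  rw [Matrix.mul_add, Matrix.add_mul, Matrix.mul_smul, Matrix.smul_mul,
    Matrix.mul_smul, Matrix.smul_mul, mul_one, hQ1]
  congr 1
  rw [show star Q * (Q * ρ * star Q) * Q = (star Q * Q) * ρ * (star Q * Q) by noncomm_ring,
    hQ1, one_mul, mul_one]
end
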